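/- arXiv:1803.03358 — 2 statements merged into one kernel-verified Lean document; each statement's English description precedes it below -/
import Mathlib

section
/- Let (G, k) be a reduced yes-instance of the diamond-free editing problem and let (E+, E−) be a solution of (G, k). For every pair of vertices u, v with uv ∈ E+ ∪ E−, the set N(u) ∩ N(v) has at most 3k vertices. -/
variable {V : Type*}

/-- An induced diamond on vertices `u v x y`: all five edges present except `xy`;
`uv` is the cross edge and `xy` the missing edge. -/
def IsDiamond (G : SimpleGraph V) (u v x y : V) : Prop :=
  u ≠ v ∧ u ≠ x ∧ u ≠ y ∧ v ≠ x ∧ v ≠ y ∧ x ≠ y ∧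
  G.Adj u v ∧ G.Adj u x ∧ G.Adj u y ∧ G.Adj v x ∧ G.Adj v y ∧ ¬ G.Adj x y

def DiamondFree (G : SimpleGraph V) : Prop :=
  ∀ u v x y : V, ¬ IsDiamond G u v x y

/-- The graph `G △ E±` obtained from `G` by adding the edges of `Ep` and
deleting the edges of `Em`. -/
def EditedGraph (G : SimpleGraph V) (Ep Em : Finset (Sym2 V)) : SimpleGraph V :=
  SimpleGraph.fromEdgeSet ((G.edgeSet ∪ ↑Ep) \ ↑Em)

/-- `(Ep, Em)` is a solution of the instance `(G, k)` of diamond-free editing: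
`Ep` is a set of non-edges of `G`, `Em` a set of edges of `G`,
`|Ep| + |Em| ≤ k`, and the edited graph is diamond-free. -/
def IsSolution (G : SimpleGraph V) (k : ℕ) (Ep Em : Finset (Sym2 V)) : Prop :=
  (∀ e ∈ Ep, e ∉ G.edgeSet ∧ ¬ e.IsDiag) ∧
  (∀ e ∈ Em, e ∈ G.edgeSet) ∧
  Ep.card + Em.card ≤ k ∧
  DiamondFree (EditedGraph G Ep Em)

def YesInstance (G : SimpleGraph V) (k : ℕ) : Prop :=
  ∃ Ep Em : Finset (Sym2 V), IsSolution G k Ep Em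

/-- A minimum solution: a solution such that no valid edit set of strictly
smaller total size makes the graph diamond-free. -/
def IsMinSolution (G : SimpleGraph V) (k : ℕ) (Ep Em : Finset (Sym2 V)) : Prop :=
  IsSolution G k Ep Em ∧
  ∀ Ep' Em' : Finset (Sym2 V),
    (∀ e ∈ Ep', e ∉ G.edgeSet ∧ ¬ e.IsDiag) →
    (∀ e ∈ Em', e ∈ G.edgeSet) →
    DiamondFree (EditedGraph G Ep' Em') →
    Ep.card + Em.card ≤ Ep'.card + Em'.card

/-- There are `2k+2` distinct vertices `x 0, y 0, …, x k, y k` in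
`N(u) ∩ N(v)` with each `x i y i` an edge of `G`. -/
def EdgePairedWitness (G : SimpleGraph V) (k : ℕ) (u v : V) : Prop :=
  ∃ x y : Fin (k + 1) → V,
    Function.Injective (Sum.elim x y) ∧
    (∀ i, G.Adj u (x i) ∧ G.Adj v (x i) ∧ G.Adj u (y i) ∧ G.Adj v (y i)) ∧
    (∀ i, G.Adj (x i) (y i))

/-- There are `2k+2` distinct vertices `x 0, y 0, …, x k, y k` in
`N(u) ∩ N(v)` with each `x i y i` a non-edge of `G`. -/
def NonEdgePairedWitness (G : SimpleGraph V) (k : ℕ) (u v : V) : Prop :=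
  ∃ x y : Fin (k + 1) → V,
    Function.Injective (Sum.elim x y) ∧
    (∀ i, G.Adj u (x i) ∧ G.Adj v (x i) ∧ G.Adj u (y i) ∧ G.Adj v (y i)) ∧
    (∀ i, ¬ G.Adj (x i) (y i))

/-- The instance `(G, k)` is reduced: neither sunflower rule applies. -/
def Reduced (G : SimpleGraph V) (k : ℕ) : Prop :=
  (∀ u v : V, u ≠ v → ¬ G.Adj u v → ¬ EdgePairedWitness G k u v) ∧
  (∀ u v : V, G.Adj u v → ¬ NonEdgePairedWitness G k u v)

/-- `K` is a maximal clique of `G`. -/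
def IsMaxClique (G : SimpleGraph V) (K : Finset V) : Prop :=
  G.IsClique (↑K : Set V) ∧
  ∀ K' : Finset V, G.IsClique (↑K' : Set V) → K ⊆ K' → K = K'

/-- `K` is a type-I maximal clique: it shares at least two vertices with some
other maximal clique. -/
def TypeI [DecidableEq V] (G : SimpleGraph V) (K : Finset V) : Prop :=
  IsMaxClique G K ∧
  ∃ K' : Finset V, IsMaxClique G K' ∧ K' ≠ K ∧ 2 ≤ (K ∩ K').card

/-- `K` is a type-II maximal clique: it shares at most one vertex with every
other maximal clique. -/
def TypeII [DecidableEq V] (G : SimpleGraph V) (K : Finset V) : Prop :=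
  IsMaxClique G K ∧
  ∀ K' : Finset V, IsMaxClique G K' → K' ≠ K → (K ∩ K').card ≤ 1

/-- A small (fewer than `3k+2` vertices) type-I maximal clique. -/
def SmallTypeI [DecidableEq V] (G : SimpleGraph V) (k : ℕ) (K : Finset V) : Prop :=
  TypeI G K ∧ K.card < 3 * k + 2

/-- `S(G)`: the union of all small type-I maximal cliques of `G`. -/
def SG [DecidableEq V] (G : SimpleGraph V) (k : ℕ) : Set V :=
  {v | ∃ K : Finset V, SmallTypeI G k K ∧ v ∈ K}

/-- A vulnerable vertex: it is in a small type-I maximal clique, or in a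
type-II maximal clique intersecting a small type-I maximal clique. -/
def Vulnerable [DecidableEq V] (G : SimpleGraph V) (k : ℕ) (v : V) : Prop :=
  (∃ K : Finset V, SmallTypeI G k K ∧ v ∈ K) ∨
  (∃ K1 K2 : Finset V, SmallTypeI G k K1 ∧ TypeII G K2 ∧
    (K1 ∩ K2).Nonempty ∧ v ∈ K2)

/-! Being reduced says that the common neighbourhood `W` of `u` and `v` holds no `k + 1` disjoint
pairs `xy` with `xy` adjacent iff `uv` is not. Removing a maximal family of such pairs leaves
`I ⊆ W` with `|W| ≤ |I| + 2k` on which every pair is adjacent iff `uv` is. Since `uv` is edited,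
diamond-freeness of the edited graph forces every pair `xy` in `I` whose four edges to `u` and `v`
are kept to be edited as well, and charging each vertex of `I` but one to an edit at it gives
`|I| ≤ |E+ ∪ E−| ≤ k`. -/

open Finset SimpleGraph

def HasDisjointPairs (R : V → V → Prop) (W : Set V) (n : ℕ) : Prop :=
  ∃ x y : Fin n → V, Function.Injective (Sum.elim x y) ∧
    (∀ i, x i ∈ W ∧ y i ∈ W) ∧ ∀ i, R (x i) (y i)

lemma hasDisjointPairs_zero (R : V → V → Prop) (W : Set V) : HasDisjointPairs R W 0 :=
  ⟨Fin.elim0, Fin.elim0, by rintro (i | i) <;> exact i.elim0, fun i => i.elim0,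
    fun i => i.elim0⟩

lemma HasDisjointPairs.cons {R : V → V → Prop} {S W : Set V} {n : ℕ} {a b : V}
    (h : HasDisjointPairs R S n) (hS : S ⊆ W \ {a, b}) (ha : a ∈ W) (hb : b ∈ W)
    (hab : a ≠ b) (hR : R a b) : HasDisjointPairs R W (n + 1) := by
  obtain ⟨x, y, hinj, hmem, hxy⟩ := h
  have hx i : x i ∈ W ∧ x i ≠ a ∧ x i ≠ b := by simpa [not_or] using hS (hmem i).1
  have hy i : y i ∈ W ∧ y i ≠ a ∧ y i ≠ b := by simpa [not_or] using hS (hmem i).2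
  obtain ⟨hxinj, hyinj, hxy_ne⟩ := Sum.elim_injective.1 hinj
  refine ⟨Fin.cons a x, Fin.cons b y, Sum.elim_injective.2 ⟨?_, ?_, ?_⟩,
    Fin.cases ⟨ha, hb⟩ fun i => ⟨(hx i).1, (hy i).1⟩, Fin.cases hR hxy⟩
  · exact Fin.cons_injective_of_injective (by rintro ⟨i, hi⟩; exact (hx i).2.1 hi) hxinj
  · exact Fin.cons_injective_of_injective (by rintro ⟨i, hi⟩; exact (hy i).2.2 hi) hyinj
  · intro i j
    cases i using Fin.cases <;> cases j using Fin.cases <;>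
      simp [hab, (hx _).2.2, (hy _).2.1.symm, hxy_ne]

lemma exists_pairwise_not_of_not_hasDisjointPairs [DecidableEq V] (R : V → V → Prop) (n : ℕ)
    (W : Finset V) (h : ¬ HasDisjointPairs R W (n + 1)) :
    ∃ I ⊆ W, (I : Set V).Pairwise (fun a b => ¬ R a b) ∧ #W ≤ #I + 2 * n := by
  induction n generalizing W with
  | zero =>
    exact ⟨W, subset_rfl, fun a ha b hb hab hR =>
      h ((hasDisjointPairs_zero R ∅).cons (by simp) ha hb hab hR), by omega⟩
  | succ n ih =>
    by_cases hW : (W : Set V).Pairwise fun a b => ¬ R a b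
    · exact ⟨W, subset_rfl, hW, by omega⟩
    obtain ⟨a, ha, b, hb, hab, hR⟩ : ∃ a ∈ W, ∃ b ∈ W, a ≠ b ∧ R a b := by
      simpa [Set.Pairwise] using hW
    have hW' : (((W.erase a).erase b : Finset V) : Set V) ⊆ W \ {a, b} := by
      intro z
      simp +contextual
    obtain ⟨I, hIW, hI, hcard⟩ := ih _ fun h' => h (h'.cons hW' ha hb hab hR)
    have := card_erase_add_one ha
    have := card_erase_add_one (mem_erase.2 ⟨hab.symm, hb⟩)
    exact ⟨I, hIW.trans ((erase_subset _ _).trans (erase_subset _ _)), hI, by omega⟩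

lemma card_le_card_of_forced [DecidableEq V] {E : Finset (Sym2 V)} {I : Finset V} {u v : V}
    (huv : s(u, v) ∈ E) (hu : u ∉ I) (hv : v ∉ I)
    (hforce : ∀ x ∈ I, ∀ y ∈ I, x ≠ y → s(u, x) ∉ E → s(v, x) ∉ E →
      s(u, y) ∉ E → s(v, y) ∉ E → s(x, y) ∈ E) : #I ≤ #E := by
  obtain rfl | ⟨z, hz⟩ := I.eq_empty_or_nonempty
  · simp
  obtain ⟨x₀, hx₀, hx₀E⟩ : ∃ x₀ ∈ I, ∀ x ∈ I, s(u, x) ∉ E → s(v, x) ∉ E →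
      s(u, x₀) ∉ E ∧ s(v, x₀) ∉ E := by
    by_cases h : ∃ x ∈ I, s(u, x) ∉ E ∧ s(v, x) ∉ E
    · obtain ⟨x, hx, hxE⟩ := h
      exact ⟨x, hx, fun _ _ _ _ => hxE⟩
    · push Not at h
      exact ⟨z, hz, fun x hx hux hvx => absurd (h x hx hux) hvx⟩
  -- Charge `x ∈ I \ {x₀}` to `s(u, x)`, `s(v, x)` or else `s(x₀, x)`, which is then forced
  -- because `x₀` is untouched too; a pair through `u`, `v` or `x₀` is charged at most once.
  have hcard : #(I.erase x₀) ≤ #(E.erase s(u, v)) := by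
    refine card_le_card_of_forall_subsingleton
      (fun x e => x ∈ e ∧ (u ∈ e ∨ v ∈ e ∨ x₀ ∈ e)) ?_ ?_
    · intro x hx
      obtain ⟨hxx₀, hxI⟩ := mem_erase.1 hx
      have hmem_erase : ∀ e : Sym2 V, x ∈ e → e ∈ E → e ∈ E.erase s(u, v) := fun e hxe he =>
        mem_erase.2 ⟨by rintro rfl; aesop, he⟩
      by_cases hux : s(u, x) ∈ E
      · exact ⟨_, hmem_erase _ (Sym2.mem_mk_right _ _) hux, by simp⟩
      by_cases hvx : s(v, x) ∈ E
      · exact ⟨_, hmem_erase _ (Sym2.mem_mk_right _ _) hvx, by simp⟩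
      have hxE := hforce x₀ hx₀ x hxI (Ne.symm hxx₀) (hx₀E x hxI hux hvx).1
        (hx₀E x hxI hux hvx).2 hux hvx
      exact ⟨_, hmem_erase _ (Sym2.mem_mk_right _ _) hxE, by simp⟩
    · rintro e - x ⟨hx, hxe, hpe⟩ y ⟨hy, hye, -⟩
      by_contra hxy
      rw [(Sym2.mem_and_mem_iff hxy).1 ⟨hxe, hye⟩] at hpe
      simp only [mem_erase] at hx hy
      aesop
  have := card_erase_add_one hx₀
  have := card_erase_add_one huv
  omega

lemma DiamondFree.adj_iff_adj {H : SimpleGraph V} (hH : DiamondFree H) {u v x y : V}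
    (huv : u ≠ v) (hxy : x ≠ y) (hux : H.Adj u x) (hvx : H.Adj v x) (huy : H.Adj u y)
    (hvy : H.Adj v y) : H.Adj u v ↔ H.Adj x y := by
  constructor
  · intro h
    by_contra h'
    exact hH u v x y ⟨huv, hux.ne, huy.ne, hvx.ne, hvy.ne, hxy, h, hux, huy, hvx, hvy, h'⟩
  · intro h
    by_contra h'
    exact hH x y u v ⟨hxy, hux.ne', hvx.ne', huy.ne', hvy.ne', huv, h, hux.symm, hvx.symm,
      huy.symm, hvy.symm, h'⟩

section EditedGraph

variable {G : SimpleGraph V} {Ep Em : Finset (Sym2 V)} {a b : V}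

lemma editedGraph_adj :
    (EditedGraph G Ep Em).Adj a b ↔ ((G.Adj a b ∨ s(a, b) ∈ Ep) ∧ s(a, b) ∉ Em) ∧ a ≠ b := by
  simp only [EditedGraph, fromEdgeSet_adj, Set.mem_sdiff, Set.mem_union, mem_edgeSet, mem_coe]

variable [DecidableEq V]

lemma editedGraph_adj_of_notMem (h : s(a, b) ∉ Ep ∪ Em) :
    (EditedGraph G Ep Em).Adj a b ↔ G.Adj a b := by
  rw [mem_union, not_or] at h
  rw [editedGraph_adj]
  exact ⟨fun hab => hab.1.1.resolve_right h.1, fun hab => ⟨⟨.inl hab, h.2⟩, hab.ne⟩⟩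

lemma editedGraph_adj_of_mem (hEp : ∀ e ∈ Ep, e ∉ G.edgeSet ∧ ¬ e.IsDiag)
    (hEm : ∀ e ∈ Em, e ∈ G.edgeSet) (h : s(a, b) ∈ Ep ∪ Em) :
    (EditedGraph G Ep Em).Adj a b ↔ ¬ G.Adj a b := by
  rw [editedGraph_adj]
  rcases mem_union.1 h with hp | hm
  · have hnm : s(a, b) ∉ Em := fun hm => (hEp _ hp).1 (hEm _ hm)
    have := hEp _ hp
    rw [mem_edgeSet, Sym2.mk_isDiag_iff] at this
    tauto
  · have := hEm _ hm
    rw [mem_edgeSet] at this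
    tauto

lemma ne_of_mem_edits (hEp : ∀ e ∈ Ep, e ∉ G.edgeSet ∧ ¬ e.IsDiag)
    (hEm : ∀ e ∈ Em, e ∈ G.edgeSet) (h : s(a, b) ∈ Ep ∪ Em) : a ≠ b := by
  rintro rfl
  simpa using editedGraph_adj_of_mem hEp hEm h

end EditedGraph

lemma mem_edits_of_diamondFree [DecidableEq V] {G : SimpleGraph V} {Ep Em : Finset (Sym2 V)}
    (hEp : ∀ e ∈ Ep, e ∉ G.edgeSet ∧ ¬ e.IsDiag) (hEm : ∀ e ∈ Em, e ∈ G.edgeSet)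
    (hfree : DiamondFree (EditedGraph G Ep Em)) {u v x y : V} (huv : s(u, v) ∈ Ep ∪ Em)
    (hx : x ∈ G.commonNeighbors u v) (hy : y ∈ G.commonNeighbors u v) (hxy : x ≠ y)
    (hG : G.Adj x y ↔ G.Adj u v) (hux : s(u, x) ∉ Ep ∪ Em) (hvx : s(v, x) ∉ Ep ∪ Em)
    (huy : s(u, y) ∉ Ep ∪ Em) (hvy : s(v, y) ∉ Ep ∪ Em) : s(x, y) ∈ Ep ∪ Em := by
  by_contra h
  rw [mem_commonNeighbors] at hx hy
  have := hfree.adj_iff_adj (ne_of_mem_edits hEp hEm huv) hxy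
    ((editedGraph_adj_of_notMem hux).2 hx.1) ((editedGraph_adj_of_notMem hvx).2 hx.2)
    ((editedGraph_adj_of_notMem huy).2 hy.1) ((editedGraph_adj_of_notMem hvy).2 hy.2)
  rw [editedGraph_adj_of_mem hEp hEm huv, editedGraph_adj_of_notMem h] at this
  tauto

lemma Reduced.not_hasDisjointPairs {G : SimpleGraph V} {k : ℕ} (hred : Reduced G k) {u v : V}
    (huv : u ≠ v) :
    ¬ HasDisjointPairs (fun x y => G.Adj x y ↔ ¬ G.Adj u v) (G.commonNeighbors u v) (k + 1) := by
  rintro ⟨x, y, hinj, hmem, hR⟩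
  have hW i : G.Adj u (x i) ∧ G.Adj v (x i) ∧ G.Adj u (y i) ∧ G.Adj v (y i) := by
    simpa [mem_commonNeighbors, and_assoc] using hmem i
  by_cases hadj : G.Adj u v
  · exact hred.2 u v hadj ⟨x, y, hinj, hW, fun i => by simpa [hadj] using hR i⟩
  · exact hred.1 u v huv hadj ⟨x, y, hinj, hW, fun i => by simpa [hadj] using hR i⟩

theorem stmt2_general [Fintype V] [DecidableEq V] (G : SimpleGraph V) (k : ℕ)
    (hred : Reduced G k)
    (Ep Em : Finset (Sym2 V)) (hsol : IsSolution G k Ep Em)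
    (u v : V) (hmem : s(u, v) ∈ Ep ∪ Em) :
    (G.neighborSet u ∩ G.neighborSet v).ncard ≤ 3 * k := by
  classical
  rw [← commonNeighbors_eq, Set.ncard_eq_toFinset_card']
  obtain ⟨hEp, hEm, hk, hfree⟩ := hsol
  set W := (G.commonNeighbors u v).toFinset
  obtain ⟨I, hIW, hI, hWI⟩ := exists_pairwise_not_of_not_hasDisjointPairs _ k W
    (by simpa [W] using hred.not_hasDisjointPairs (ne_of_mem_edits hEp hEm hmem))
  have hIW' : ∀ x ∈ I, x ∈ G.commonNeighbors u v := fun x hx => by simpa [W] using hIW hx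
  have hIE : #I ≤ #(Ep ∪ Em) :=
    card_le_card_of_forced hmem (fun hu => notMem_commonNeighbors_left _ _ _ (hIW' u hu))
      (fun hv => notMem_commonNeighbors_right _ _ _ (hIW' v hv))
      fun x hx y hy hxy => mem_edits_of_diamondFree hEp hEm hfree hmem (hIW' x hx) (hIW' y hy)
        hxy (by have := hI hx hy hxy; tauto)
  have := card_union_le Ep Em
  omega

/-- in a reduced yes-instance, for every pair `u, v` with
`uv ∈ E+ ∪ E−` for a solution, `|N(u) ∩ N(v)| ≤ 3k`. -/
theorem stmt2 [Fintype V] [DecidableEq V] (G : SimpleGraph V) (k : ℕ)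
    (hred : Reduced G k) (hyes : YesInstance G k)
    (Ep Em : Finset (Sym2 V)) (hsol : IsSolution G k Ep Em)
    (u v : V) (hmem : s(u, v) ∈ Ep ∪ Em) :
    (G.neighborSet u ∩ G.neighborSet v).ncard ≤ 3 * k :=
  stmt2_general G k hred Ep Em hsol u v hmem
end

section
/- Let (E+, E−) be a minimum solution to an instance (G, k) of the diamond-free editing problem, and let K be a type-II maximal clique of G. Suppose that E+ contains no edge with one end in K and the other end in N(K) (the set of vertices outside K having a neighbor in K), and that E+ does not contain two edges joining the same vertex of V(G) \ K to two vertices of K. Then K is a maximal clique of the edited graph G △ E±. -/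
variable {V : Type*}

section Stmt8Aux

open SimpleGraph

private lemma edited_adj (G : SimpleGraph V) (Ep Em : Finset (Sym2 V)) {a b : V} :
    (EditedGraph G Ep Em).Adj a b ↔
      ((G.Adj a b ∨ s(a, b) ∈ Ep) ∧ s(a, b) ∉ Em) ∧ a ≠ b := by
  rw [EditedGraph, SimpleGraph.fromEdgeSet_adj]
  simp [Set.mem_diff, SimpleGraph.mem_edgeSet, and_assoc]

private lemma exists_maxClique [Fintype V] (G : SimpleGraph V) (C : Finset V)
    (hC : G.IsClique (↑C : Set V)) : ∃ K', IsMaxClique G K' ∧ C ⊆ K' := by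
  classical
  set S : Finset (Finset V) :=
    Finset.univ.filter (fun K' => G.IsClique (↑K' : Set V) ∧ C ⊆ K') with hS
  have hCS : C ∈ S := by simp [hS, hC]
  obtain ⟨M, hM, hmax⟩ := Finset.exists_max_image S Finset.card ⟨C, hCS⟩
  simp only [hS, Finset.mem_filter, Finset.mem_univ, true_and] at hM
  refine ⟨M, ⟨hM.1, ?_⟩, hM.2⟩
  intro K' hK' hsub
  have hK'S : K' ∈ S := by
    simp only [hS, Finset.mem_filter, Finset.mem_univ, true_and]
    exact ⟨hK', hM.2.trans hsub⟩
  exact Finset.eq_of_subset_of_card_le hsub (hmax K' hK'S)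

/-- In the type-II situation, no vertex outside `K` can be joined by
`G ∪ Ep`-edges to two distinct vertices of `K`. -/
private lemma claimA [Fintype V] [DecidableEq V] (G : SimpleGraph V)
    (Ep : Finset (Sym2 V)) (K : Finset V) (hK : TypeII G K)
    (h1 : ∀ u ∈ K, ∀ w : V, w ∉ K → (∃ z ∈ K, G.Adj w z) → s(u, w) ∉ Ep)
    (h2 : ∀ w : V, w ∉ K → ∀ u ∈ K, ∀ u' ∈ K, u ≠ u' →
      ¬ (s(u, w) ∈ Ep ∧ s(u', w) ∈ Ep))
    {w u u' : V} (hw : w ∉ K) (hu : u ∈ K) (hu' : u' ∈ K) (hne : u ≠ u')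
    (e1 : G.Adj u w ∨ s(u, w) ∈ Ep) (e2 : G.Adj u' w ∨ s(u', w) ∈ Ep) : False := by
  classical
  rcases e1 with e1 | e1
  · rcases e2 with e2 | e2
    · -- both G-edges: contradicts type-II
      have hclique : G.IsClique (↑({u, u', w} : Finset V) : Set V) := by
        intro a ha b hb hab
        have hKc := hK.1.1
        simp only [Finset.coe_insert, Finset.coe_singleton, Set.mem_insert_iff,
          Set.mem_singleton_iff] at ha hb
        rcases ha with rfl | rfl | rfl <;> rcases hb with rfl | rfl | rfl <;>
          first
          | exact absurd rfl hab
          | exact hKc hu hu' hne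
          | exact (hKc hu hu' hne).symm
          | exact e1
          | exact e1.symm
          | exact e2
          | exact e2.symm
      obtain ⟨K', hK'max, hsub⟩ := exists_maxClique G {u, u', w} hclique
      have hK'ne : K' ≠ K := by
        intro h
        exact hw (h ▸ hsub (by simp))
      have hcard := hK.2 K' hK'max hK'ne
      have h2card : 1 < (K ∩ K').card := by
        apply Finset.one_lt_card.mpr
        refine ⟨u, ?_, u', ?_, hne⟩
        · exact Finset.mem_inter.mpr ⟨hu, hsub (by simp)⟩
        · exact Finset.mem_inter.mpr ⟨hu', hsub (by simp)⟩
      omega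
    · exact h1 u' hu' w hw ⟨u, hu, e1.symm⟩ e2
  · rcases e2 with e2 | e2
    · exact h1 u hu w hw ⟨u', hu', e2.symm⟩ e1
    · exact h2 w hw u hu u' hu' hne ⟨e1, e2⟩

end Stmt8Aux

/-- if `K` is a type-II maximal clique and `E+` has no edge between
`K` and `N(K)`, nor two edges from one outside vertex to two vertices of `K`,
then `K` remains a maximal clique of the edited graph. -/
theorem stmt8 [Fintype V] [DecidableEq V] (G : SimpleGraph V) (k : ℕ)
    (Ep Em : Finset (Sym2 V)) (hmin : IsMinSolution G k Ep Em)
    (K : Finset V) (hK : TypeII G K)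
    (h1 : ∀ u ∈ K, ∀ w : V, w ∉ K → (∃ z ∈ K, G.Adj w z) → s(u, w) ∉ Ep)
    (h2 : ∀ w : V, w ∉ K → ∀ u ∈ K, ∀ u' ∈ K, u ≠ u' →
      ¬ (s(u, w) ∈ Ep ∧ s(u', w) ∈ Ep)) :
    IsMaxClique (EditedGraph G Ep Em) K := by
  classical
  obtain ⟨⟨hEp, hEm, hcard, hdf⟩, hminimal⟩ := hmin
  have hKc := hK.1.1
  have hA : ∀ {w u u' : V}, w ∉ K → u ∈ K → u' ∈ K → u ≠ u' →
      (G.Adj u w ∨ s(u, w) ∈ Ep) → (G.Adj u' w ∨ s(u', w) ∈ Ep) → False :=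
    fun hw hu hu' hne e1 e2 => claimA G Ep K hK h1 h2 hw hu hu' hne e1 e2
  -- Step 1: Em contains no edge with both ends in K
  have step1 : ∀ a ∈ K, ∀ b ∈ K, s(a, b) ∉ Em := by
    by_contra hcon
    push_neg at hcon
    obtain ⟨a, ha, b, hb, hab⟩ := hcon
    have habne : a ≠ b := by
      rintro rfl
      have := hEm _ hab
      simp [SimpleGraph.mem_edgeSet] at this
    set Em' : Finset (Sym2 V) := Em.filter (fun e => ¬ ∀ v ∈ e, v ∈ K) with hEm'def
    have hEm'sub : Em' ⊆ Em := Finset.filter_subset _ _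
    -- the modified solution is diamond-free
    have hdf' : DiamondFree (EditedGraph G Ep Em') := by
      set H := EditedGraph G Ep Em' with hHdef
      -- edges of H are edges of the edited graph or restored intra-K edges
      have hsplit : ∀ {p q : V}, H.Adj p q →
          (EditedGraph G Ep Em).Adj p q ∨ (p ∈ K ∧ q ∈ K) := by
        intro p q hpq
        rw [hHdef, edited_adj] at hpq
        by_cases hmem : s(p, q) ∈ Em
        · right
          have := hpq.1.2
          rw [hEm'def, Finset.mem_filter] at this
          have hall : ∀ v ∈ s(p, q), v ∈ K := by
            by_contra hno
            exact this ⟨hmem, hno⟩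
          exact ⟨hall p (by simp), hall q (by simp)⟩
        · left
          rw [edited_adj]
          exact ⟨⟨hpq.1.1, hmem⟩, hpq.2⟩
      have hle : ∀ {p q : V}, (EditedGraph G Ep Em).Adj p q → H.Adj p q := by
        intro p q hpq
        rw [edited_adj] at hpq
        rw [hHdef, edited_adj]
        exact ⟨⟨hpq.1.1, fun hmem => hpq.1.2 (hEm'sub hmem)⟩, hpq.2⟩
      have hintra : ∀ p ∈ K, ∀ q ∈ K, p ≠ q → H.Adj p q := by
        intro p hp q hq hpq
        rw [hHdef, edited_adj]
        refine ⟨⟨Or.inl (hKc hp hq hpq), ?_⟩, hpq⟩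
        intro hmem
        rw [hEm'def, Finset.mem_filter] at hmem
        apply hmem.2
        intro v hv
        rw [Sym2.mem_iff] at hv
        rcases hv with rfl | rfl
        exacts [hp, hq]
      have hout : ∀ {p q r : V}, p ∈ K → q ∈ K → p ≠ q →
          H.Adj p r → H.Adj q r → r ∈ K := by
        intro p q r hp hq hpq hpr hqr
        by_contra hr
        rw [hHdef, edited_adj] at hpr hqr
        exact hA hr hp hq hpq hpr.1.1 hqr.1.1
      rintro u v x y ⟨huv, hux, huy, hvx, hvy, hxy, auv, aux_, auy, avx, avy, nxy⟩
      -- if u and v are both in K we get a contradiction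
      have hUV : u ∈ K → v ∈ K → False := by
        intro hu hv
        have hx : x ∈ K := hout hu hv huv aux_ avx
        have hy : y ∈ K := hout hu hv huv auy avy
        exact nxy (hintra x hx y hy hxy)
      -- case analysis on which edge is a restored intra-K edge
      rcases hsplit auv with guv | ⟨hu, hv⟩
      · rcases hsplit aux_ with gux | ⟨hu, hx⟩
        · rcases hsplit auy with guy | ⟨hu, hy⟩
          · rcases hsplit avx with gvx | ⟨hv, hx⟩
            · rcases hsplit avy with gvy | ⟨hv, hy⟩
              · -- all five edges in the original edited graph: a real diamond
                have nxy' : ¬ (EditedGraph G Ep Em).Adj x y := fun h => nxy (hle h)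
                exact hdf u v x y
                  ⟨huv, hux, huy, hvx, hvy, hxy, guv, gux, guy, gvx, gvy, nxy'⟩
              · exact hUV (hout hv hy hvy auv.symm auy.symm) hv
            · exact hUV (hout hv hx hvx auv.symm aux_.symm) hv
          · exact hUV hu (hout hu hy huy auv avy.symm)
        · exact hUV hu (hout hu hx hux auv avx.symm)
      · exact hUV hu hv
    -- minimality contradiction
    have hEm'cond : ∀ e ∈ Em', e ∈ G.edgeSet := fun e he => hEm e (hEm'sub he)
    have hle' := hminimal Ep Em' hEp hEm'cond hdf'
    have habnot : s(a, b) ∉ Em' := by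
      rw [hEm'def, Finset.mem_filter]
      rintro ⟨-, hno⟩
      apply hno
      intro v hv
      rw [Sym2.mem_iff] at hv
      rcases hv with rfl | rfl
      exacts [ha, hb]
    have : Em'.card < Em.card :=
      Finset.card_lt_card (Finset.ssubset_iff_of_subset hEm'sub |>.mpr ⟨_, hab, habnot⟩)
    omega
  -- K is a clique of the edited graph
  have hclique' : (EditedGraph G Ep Em).IsClique (↑K : Set V) := by
    intro p hp q hq hpq
    rw [edited_adj]
    exact ⟨⟨Or.inl (hKc hp hq hpq), step1 p hp q hq⟩, hpq⟩
  refine ⟨hclique', ?_⟩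
  -- maximality
  intro K'' hK'' hsub
  by_contra hne
  obtain ⟨w, hwK'', hwK⟩ := Finset.exists_of_ssubset (hsub.ssubset_of_ne hne)
  rcases Nat.lt_or_ge K.card 2 with hlt | hge
  · interval_cases h : K.card
    · -- K empty: contradicts maximality of K in G
      have hKempty : K = ∅ := Finset.card_eq_zero.mp h
      have hsing : G.IsClique (↑({w} : Finset V) : Set V) := by
        simp [Set.pairwise_singleton]
      have := hK.1.2 {w} hsing (hKempty ▸ Finset.empty_subset _)
      rw [hKempty] at this
      exact (Finset.singleton_ne_empty w) this.symm
    · -- K = {z}: z is isolated in G, so the Ep edge from z to w is removable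
      obtain ⟨z, hz⟩ := Finset.card_eq_one.mp h
      have hzK : z ∈ K := hz ▸ Finset.mem_singleton_self z
      have hiso : ∀ t : V, ¬ G.Adj z t := by
        intro t ht
        have hcl : G.IsClique (↑({z, t} : Finset V) : Set V) := by
          intro a ha b hb hab
          simp only [Finset.coe_insert, Finset.coe_singleton, Set.mem_insert_iff,
            Set.mem_singleton_iff] at ha hb
          rcases ha with rfl | rfl <;> rcases hb with rfl | rfl <;>
            first
            | exact absurd rfl hab
            | exact ht
            | exact ht.symm
        have := hK.1.2 {z, t} hcl (by rw [hz]; intro a ha; simp at ha; simp [ha])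
        rw [hz] at this
        have hmem : t ∈ ({z} : Finset V) := by rw [this]; simp
        rw [Finset.mem_singleton] at hmem
        subst hmem
        exact G.irrefl ht
      have hzw : z ≠ w := fun hzw => hwK (hzw ▸ hzK)
      have hadj : (EditedGraph G Ep Em).Adj z w := hK'' (hsub hzK) hwK'' hzw
      rw [edited_adj] at hadj
      have hzwEp : s(z, w) ∈ Ep := by
        rcases hadj.1.1 with hg | hp
        · exact absurd hg (hiso w)
        · exact hp
      -- remove all Ep edges incident to z
      set Ep' : Finset (Sym2 V) := Ep.filter (fun e => z ∉ e) with hEp'def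
      have hEp'sub : Ep' ⊆ Ep := Finset.filter_subset _ _
      have hnoz : ∀ t : V, ¬ (EditedGraph G Ep' Em).Adj z t := by
        intro t ht
        rw [edited_adj] at ht
        rcases ht.1.1 with hg | hp
        · exact hiso t hg
        · rw [hEp'def, Finset.mem_filter] at hp
          exact hp.2 (by simp)
      have hdf' : DiamondFree (EditedGraph G Ep' Em) := by
        rintro a b c d ⟨hab, hac, had, hbc, hbd, hcd, aab, aac, aad, abc, abd, ncd⟩
        have haz : a ≠ z := fun h => hnoz b (h ▸ aab)
        have hbz : b ≠ z := fun h => hnoz a (h ▸ aab.symm)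
        have hcz : c ≠ z := fun h => hnoz a (h ▸ aac.symm)
        have hdz : d ≠ z := fun h => hnoz a (h ▸ aad.symm)
        have htrans : ∀ {p q : V}, (EditedGraph G Ep' Em).Adj p q →
            (EditedGraph G Ep Em).Adj p q := by
          intro p q hpq
          rw [edited_adj] at hpq ⊢
          exact ⟨⟨hpq.1.1.imp id (fun hp => hEp'sub hp), hpq.1.2⟩, hpq.2⟩
        have hncd : ¬ (EditedGraph G Ep Em).Adj c d := by
          intro hcd'
          apply ncd
          rw [edited_adj] at hcd' ⊢
          refine ⟨⟨?_, hcd'.1.2⟩, hcd'.2⟩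
          rcases hcd'.1.1 with hg | hp
          · exact Or.inl hg
          · refine Or.inr ?_
            rw [hEp'def, Finset.mem_filter]
            refine ⟨hp, ?_⟩
            rw [Sym2.mem_iff]
            rintro (rfl | rfl)
            exacts [hcz rfl, hdz rfl]
        exact hdf a b c d ⟨hab, hac, had, hbc, hbd, hcd, htrans aab, htrans aac,
          htrans aad, htrans abc, htrans abd, hncd⟩
      have hEp'cond : ∀ e ∈ Ep', e ∉ G.edgeSet ∧ ¬ e.IsDiag :=
        fun e he => hEp e (hEp'sub he)
      have hle' := hminimal Ep' Em hEp'cond hEm hdf'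
      have hzwnot : s(z, w) ∉ Ep' := by
        rw [hEp'def, Finset.mem_filter]
        rintro ⟨-, hno⟩
        exact hno (by simp)
      have : Ep'.card < Ep.card :=
        Finset.card_lt_card (Finset.ssubset_iff_of_subset hEp'sub |>.mpr ⟨_, hzwEp, hzwnot⟩)
      omega
  · -- at least two vertices in K: contradicts claim A
    obtain ⟨u, hu, u', hu', huu'⟩ := Finset.one_lt_card.mp hge
    have hadj1 : (EditedGraph G Ep Em).Adj u w :=
      hK'' (hsub hu) hwK'' (fun h => hwK (h ▸ hu))
    have hadj2 : (EditedGraph G Ep Em).Adj u' w :=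
      hK'' (hsub hu') hwK'' (fun h => hwK (h ▸ hu'))
    rw [edited_adj] at hadj1 hadj2
    exact hA hwK hu hu' huu' hadj1.1.1 hadj2.1.1
end
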